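/- arXiv:1602.02063 — 2 statements merged into one kernel-verified Lean document; each statement's English description precedes it below -/
import Mathlib

section
/- Assume U is monotone and the rows of P are sorted by strength: P i l ≥ P j l for all 1 ≤ i ≤ j ≤ m and all 1 ≤ l ≤ n (player j of Team 1 is weaker than player i whenever i ≤ j). Then V(G(T,P,U)) = V(G(T,P',U)), where P' is the T×n matrix consisting of the first T rows of P; i.e., Team 1 can abandon its m−T weakest players without changing the value of the game. -/
/-- Value function of the team competition `G(T,P,U)`, by backward induction.
`gval m n P U r X Y w` is the value of the state where the players in `X` (Team 1)
and `Y` (Team 2) have already played, Team 1 has won `w` rounds so far, and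
`r = T - |X|` rounds remain to be played.  The value of the whole game is
`gval m n P U T ∅ ∅ 0`. -/
noncomputable def gval (m n : ℕ) (P : Fin m → Fin n → ℝ) (U : ℕ → ℝ) :
    ℕ → Finset (Fin m) → Finset (Fin n) → ℕ → ℝ
  | 0, _, _, w => U w
  | r + 1, X, Y, w =>
      sSup {v : ℝ | ∃ p : Fin m → ℝ,
        (∀ i, 0 ≤ p i) ∧ (∀ i ∈ X, p i = 0) ∧ (∑ i, p i) = 1 ∧
        v = sInf {u : ℝ | ∃ j, j ∉ Y ∧
          u = ∑ i, p i *
            (P i j * gval m n P U r (insert i X) (insert j Y) (w + 1) +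
             (1 - P i j) * gval m n P U r (insert i X) (insert j Y) w)}}

/-!
With `r` rounds left, only `r` players of Team 1 will ever play. Since `U` is monotone, the value
is nondecreasing in the number of wins, so replacing a player by a stronger one never hurts
Team 1. Hence, if more than `r` players are available, Team 1 loses nothing by discarding its
weakest available player `a`: the weight a strategy puts on `a` goes to the weakest remaining
player instead, and induction on `r` controls the continuation. Discarding players `m - 1`, …, `T`
one at a time shows that the value does not drop when only the first `T` players are kept; the
converse inequality holds because every strategy of the smaller team is one of the larger team.
-/

open Finset

section Strategy

variable {α β : Type*} [Fintype α] [Fintype β] [DecidableEq β]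

def IsStrategy (X : Finset α) (p : α → ℝ) : Prop :=
  (∀ i, 0 ≤ p i) ∧ (∀ i ∈ X, p i = 0) ∧ ∑ i, p i = 1

def pushforward (φ : α → β) (p : α → ℝ) (b : β) : ℝ :=
  ∑ a with φ a = b, p a

lemma sum_pushforward_mul (φ : α → β) (p : α → ℝ) (g : β → ℝ) :
    ∑ b, pushforward φ p b * g b = ∑ a, p a * g (φ a) := by
  simp_rw [pushforward, sum_mul]
  rw [← sum_fiberwise univ φ fun a => p a * g (φ a)]
  refine sum_congr rfl fun b _ => sum_congr rfl fun a ha => ?_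
  rw [(mem_filter.1 ha).2]

lemma IsStrategy.pushforward {X : Finset α} {X' : Finset β} {p : α → ℝ}
    (hp : IsStrategy X p) {φ : α → β} (hφ : ∀ i ∉ X, φ i ∉ X') :
    IsStrategy X' (pushforward φ p) := by
  obtain ⟨hp0, hpX, hp1⟩ := hp
  refine ⟨fun b => sum_nonneg fun a _ => hp0 a, fun b hb => sum_eq_zero fun a ha => ?_, ?_⟩
  · obtain rfl := (mem_filter.1 ha).2
    exact hpX a (by_contra fun haX => hφ a haX hb)
  · simpa [hp1] using sum_pushforward_mul φ p 1

end Strategy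

lemma mix_le_mix {θ θ' x y x' y' : ℝ} (hθ : θ ∈ Set.Icc (0 : ℝ) 1) (hθθ' : θ ≤ θ')
    (hx : x ≤ x') (hy : y ≤ y') (hy' : y' ≤ x') :
    θ * x + (1 - θ) * y ≤ θ' * x' + (1 - θ') * y' := by
  nlinarith [hθ.1, hθ.2]

section Game

variable {m m' n : ℕ} {P : Fin m → Fin n → ℝ} {U : ℕ → ℝ}

noncomputable def matchValue (m n : ℕ) (P : Fin m → Fin n → ℝ) (U : ℕ → ℝ) (r : ℕ)
    (X : Finset (Fin m)) (Y : Finset (Fin n)) (w : ℕ) (i : Fin m) (j : Fin n) : ℝ :=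
  P i j * gval m n P U r (insert i X) (insert j Y) (w + 1) +
    (1 - P i j) * gval m n P U r (insert i X) (insert j Y) w

/-- When Team 2 has no player left, this is the junk value `sInf ∅ = 0`, exactly as in `gval`. -/
noncomputable def guaranteedValue (m n : ℕ) (P : Fin m → Fin n → ℝ) (U : ℕ → ℝ) (r : ℕ)
    (X : Finset (Fin m)) (Y : Finset (Fin n)) (w : ℕ) (p : Fin m → ℝ) : ℝ :=
  ⨅ j : {j // j ∉ Y}, ∑ i, p i * matchValue m n P U r X Y w i j

lemma gval_succ (r : ℕ) (X : Finset (Fin m)) (Y : Finset (Fin n)) (w : ℕ) :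
    gval m n P U (r + 1) X Y w =
      ⨆ p : {p // IsStrategy X p}, guaranteedValue m n P U r X Y w p := by
  have hrange : ∀ f : Fin n → ℝ,
      {u | ∃ j, j ∉ Y ∧ u = f j} = Set.range fun j : {j // j ∉ Y} => f j := by
    intro f; ext; simp [eq_comm]
  rw [gval, iSup]
  simp only [hrange]
  congr 1
  ext v
  simp [IsStrategy, guaranteedValue, matchValue, iInf, and_assoc, eq_comm]

lemma guaranteedValue_le {r : ℕ} {X : Finset (Fin m)} {Y : Finset (Fin n)} {w : ℕ}
    {p : Fin m → ℝ} {B : ℝ} (hB : 0 ≤ B) (hp : IsStrategy X p)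
    (hM : ∀ i j, matchValue m n P U r X Y w i j ≤ B) :
    guaranteedValue m n P U r X Y w p ≤ B := by
  have hsum : ∀ j, ∑ i, p i * matchValue m n P U r X Y w i j ≤ B := fun j =>
    calc ∑ i, p i * matchValue m n P U r X Y w i j ≤ ∑ i, p i * B :=
          sum_le_sum fun i _ => mul_le_mul_of_nonneg_left (hM i j) (hp.1 i)
      _ = B := by rw [← sum_mul, hp.2.2, one_mul]
  rcases isEmpty_or_nonempty {j // j ∉ Y} with hY | ⟨⟨j, hj⟩⟩
  · simp [guaranteedValue, hB]
  · exact ciInf_le_of_le (Set.finite_range _).bddBelow ⟨j, hj⟩ (hsum j)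

lemma matchValue_le {r : ℕ} {X : Finset (Fin m)} {Y : Finset (Fin n)} {w : ℕ} {B : ℝ}
    (hP : ∀ i j, P i j ∈ Set.Icc (0 : ℝ) 1) (i : Fin m) (j : Fin n)
    (hwin : gval m n P U r (insert i X) (insert j Y) (w + 1) ≤ B)
    (hlose : gval m n P U r (insert i X) (insert j Y) w ≤ B) :
    matchValue m n P U r X Y w i j ≤ B :=
  convex_Iic B hwin hlose (hP i j).1 (sub_nonneg.2 (hP i j).2) (add_sub_cancel _ _)

lemma gval_le_of_utility_le (hP : ∀ i j, P i j ∈ Set.Icc (0 : ℝ) 1) {B : ℝ} (hB : 0 ≤ B) :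
    ∀ (r : ℕ) (X : Finset (Fin m)) (Y : Finset (Fin n)) (w : ℕ),
      (∀ t ≤ w + r, U t ≤ B) → gval m n P U r X Y w ≤ B
  | 0, _, _, w, hU => hU w le_rfl
  | r + 1, X, Y, w, hU => by
    rw [gval_succ]
    refine Real.iSup_le (fun p => guaranteedValue_le hB p.2 fun i j => ?_) hB
    have ih := fun w' (hw' : w' ≤ w + 1) =>
      gval_le_of_utility_le hP hB r (insert i X) (insert j Y) w' fun t ht => hU t (by omega)
    exact matchValue_le hP i j (ih _ le_rfl) (ih _ w.le_succ)

lemma bddAbove_guaranteedValue (hP : ∀ i j, P i j ∈ Set.Icc (0 : ℝ) 1) (r : ℕ)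
    (X : Finset (Fin m)) (Y : Finset (Fin n)) (w : ℕ) :
    BddAbove (Set.range fun p : {p // IsStrategy X p} =>
      guaranteedValue m n P U r X Y w p) := by
  set B := ∑ t ∈ range (w + r + 2), |U t|
  have hB : 0 ≤ B := sum_nonneg fun t _ => abs_nonneg (U t)
  have hUB : ∀ t ≤ w + r + 1, U t ≤ B := fun t ht =>
    (le_abs_self _).trans (single_le_sum (fun t _ => abs_nonneg (U t)) (mem_range.2 (by omega)))
  refine ⟨B, Set.forall_mem_range.2 fun p => guaranteedValue_le hB p.2 fun i j => ?_⟩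
  have h := fun w' (hw' : w' ≤ w + 1) =>
    gval_le_of_utility_le hP hB r (insert i X) (insert j Y) w' fun t ht => hUB t (by omega)
  exact matchValue_le hP i j (h _ le_rfl) (h _ w.le_succ)

lemma gval_congr_utility {U' : ℕ → ℝ} :
    ∀ (r : ℕ) (X : Finset (Fin m)) (Y : Finset (Fin n)) (w : ℕ),
      Set.EqOn U U' (Set.Icc w (w + r)) → gval m n P U r X Y w = gval m n P U' r X Y w
  | 0, _, _, w, h => h ⟨le_rfl, le_rfl⟩
  | r + 1, X, Y, w, h => by
    have hwin : ∀ X' Y', gval m n P U r X' Y' (w + 1) = gval m n P U' r X' Y' (w + 1) :=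
      fun _ _ => gval_congr_utility r _ _ _ (h.mono (Set.Icc_subset_Icc (by omega) (by omega)))
    have hlose : ∀ X' Y', gval m n P U r X' Y' w = gval m n P U' r X' Y' w :=
      fun _ _ => gval_congr_utility r _ _ _ (h.mono (Set.Icc_subset_Icc le_rfl (by omega)))
    simp only [gval_succ, guaranteedValue, matchValue, hwin, hlose]

lemma gval_le_gval_add_one (hP : ∀ i j, P i j ∈ Set.Icc (0 : ℝ) 1) (hU : Monotone U) :
    ∀ (r : ℕ) (X : Finset (Fin m)) (Y : Finset (Fin n)) (w : ℕ),
      gval m n P U r X Y w ≤ gval m n P U r X Y (w + 1)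
  | 0, _, _, w => hU w.le_succ
  | r + 1, X, Y, w => by
    rw [gval_succ, gval_succ]
    refine ciSup_mono (bddAbove_guaranteedValue hP _ _ _ _) fun p =>
      ciInf_mono (Set.finite_range _).bddBelow fun j =>
        sum_le_sum fun i _ => mul_le_mul_of_nonneg_left ?_ (p.2.1 i)
    have h := gval_le_gval_add_one hP hU r (insert i X) (insert j.1 Y)
    exact mix_le_mix (hP i j) le_rfl (h (w + 1)) (h w) (h (w + 1))

/-- Team 1 answers a strategy `p` in the first game by its pushforward along `φ`. -/
lemma gval_succ_le_of_map {P' : Fin m' → Fin n → ℝ}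
    (hP : ∀ i j, P i j ∈ Set.Icc (0 : ℝ) 1) (hP' : ∀ i j, P' i j ∈ Set.Icc (0 : ℝ) 1)
    (hU : Monotone U) {r : ℕ}
    {X : Finset (Fin m)} {X' : Finset (Fin m')} {Y : Finset (Fin n)} {w : ℕ}
    (hX : X.card < m) (φ : Fin m → Fin m') (hφ : ∀ i ∉ X, φ i ∉ X')
    (hPφ : ∀ i ∉ X, ∀ j, P i j ≤ P' (φ i) j)
    (hnext : ∀ i ∉ X, ∀ j w', gval m n P U r (insert i X) (insert j Y) w' ≤
      gval m' n P' U r (insert (φ i) X') (insert j Y) w') :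
    gval m n P U (r + 1) X Y w ≤ gval m' n P' U (r + 1) X' Y w := by
  obtain ⟨i₀, hi₀⟩ : Xᶜ.Nonempty := card_pos.1 (by rw [card_compl, Fintype.card_fin]; omega)
  have : Nonempty {p // IsStrategy X p} :=
    ⟨⟨Pi.single i₀ (1 : ℝ), fun i => by by_cases h : i = i₀ <;> simp [h],
      fun i hi => Pi.single_eq_of_ne (by rintro rfl; exact mem_compl.1 hi₀ hi) _, by simp⟩⟩
  rw [gval_succ, gval_succ]
  refine ciSup_mono_of_forall_exists (bddAbove_guaranteedValue hP' _ _ _ _) fun p =>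
    ⟨⟨pushforward φ p.1, p.2.pushforward hφ⟩, ?_⟩
  refine ciInf_mono (Set.finite_range _).bddBelow fun j => ?_
  rw [sum_pushforward_mul]
  refine sum_le_sum fun i _ => ?_
  by_cases hi : i ∈ X
  · simp [p.2.2.1 i hi]
  refine mul_le_mul_of_nonneg_left ?_ (p.2.1 i)
  exact mix_le_mix (hP i j) (hPφ i hi j) (hnext i hi j _) (hnext i hi j _)
    (gval_le_gval_add_one hP' hU _ _ _ _)

lemma gval_le_gval_of_injOn {P' : Fin m' → Fin n → ℝ}
    (hP : ∀ i j, P i j ∈ Set.Icc (0 : ℝ) 1) (hP' : ∀ i j, P' i j ∈ Set.Icc (0 : ℝ) 1)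
    (hU : Monotone U) (φ : Fin m → Fin m') :
    ∀ (r : ℕ) (X : Finset (Fin m)) (X' : Finset (Fin m')) (Y : Finset (Fin n)) (w : ℕ),
      X.card + r ≤ m → Set.MapsTo φ (↑X)ᶜ (↑X')ᶜ → Set.InjOn φ (↑X)ᶜ →
      (∀ i ∉ X, ∀ j, P i j ≤ P' (φ i) j) →
      gval m n P U r X Y w ≤ gval m' n P' U r X' Y w
  | 0, _, _, _, _, _, _, _, _ => le_rfl
  | r + 1, X, X', Y, w, hX, hφ, hinj, hPφ => by
    refine gval_succ_le_of_map hP hP' hU (by omega) φ (fun i hi => hφ hi) hPφ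
      fun i hi j w' => gval_le_gval_of_injOn hP hP' hU φ r _ _ _ _ ?_ ?_ ?_ ?_
    · have := card_insert_le i X
      omega
    · intro k hk
      simp only [Set.mem_compl_iff, mem_coe, mem_insert, not_or] at hk ⊢
      exact ⟨fun h => hk.1 (hinj (by simpa using hk.2) (by simpa using hi) h),
        by simpa using hφ (by simpa using hk.2)⟩
    · exact hinj.mono (by simp)
    · exact fun k hk => hPφ k (by simp_all)

/-- The weight that a strategy puts on the weakest available player `a` is moved to the weakest
player `s` left after `a`. In the continuation, dropping `a` (or, after `a` has played, `s`)
costs nothing by induction, and `s` beats every opponent at least as often as `a`. -/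
lemma gval_le_gval_insert_of_forall_le (hP : ∀ i j, P i j ∈ Set.Icc (0 : ℝ) 1)
    (hU : Monotone U) (hanti : Antitone P) :
    ∀ (r : ℕ) (X : Finset (Fin m)) (Y : Finset (Fin n)) (w : ℕ) (a : Fin m),
      a ∉ X → (∀ b ∉ X, b ≤ a) → X.card + r < m →
      gval m n P U r X Y w ≤ gval m n P U r (insert a X) Y w
  | 0, _, _, _, _, _, _, _ => le_rfl
  | r + 1, X, Y, w, a, ha, hweak, hX => by
    have hne : (insert a X)ᶜ.Nonempty := card_pos.1 (by
      have := card_insert_le a X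
      rw [card_compl, Fintype.card_fin]; omega)
    obtain ⟨s, hs, hsmax⟩ : ∃ s ∉ insert a X, ∀ b ∉ insert a X, b ≤ s :=
      ⟨_, mem_compl.1 (max'_mem _ hne), fun b hb => le_max' _ b (mem_compl.2 hb)⟩
    have hsX : s ∉ X := fun h => hs (mem_insert_of_mem h)
    refine gval_succ_le_of_map hP hP hU (by omega) (fun i => if i = a then s else i) ?_ ?_ ?_
    · intro i hi
      split_ifs with hia
      · exact hs
      · simp [hia, hi]
    · intro i hi j
      split_ifs with hia
      · exact hanti (hia ▸ hweak s hsX) j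
      · exact le_rfl
    · intro i hi j w'
      have hcard := card_insert_le i X
      split_ifs with hia
      · subst hia
        exact gval_le_gval_insert_of_forall_le hP hU hanti r _ _ _ _ hs hsmax (by omega)
      · rw [insert_comm]
        exact gval_le_gval_insert_of_forall_le hP hU hanti r _ _ _ _
          (by simp [Ne.symm hia, ha]) (fun b hb => hweak b (by simp_all)) (by omega)

lemma gval_le_gval_prefix (hP : ∀ i j, P i j ∈ Set.Icc (0 : ℝ) 1) (hU : Monotone U)
    (hanti : Antitone P) {r k : ℕ} (hrk : r ≤ k) (Y : Finset (Fin n)) (w : ℕ) :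
    gval m n P U r ({i | (i : ℕ) < k} : Finset (Fin m))ᶜ Y w ≤
      gval m n P U r ({i | (i : ℕ) < r} : Finset (Fin m))ᶜ Y w := by
  induction k, hrk using Nat.le_induction with
  | base => exact le_rfl
  | succ k hrk ih =>
    refine le_trans ?_ ih
    by_cases hk : k < m
    · have hinsert : ({i | (i : ℕ) < k} : Finset (Fin m))ᶜ =
          insert ⟨k, hk⟩ ({i | (i : ℕ) < k + 1} : Finset (Fin m))ᶜ := by
        ext i
        simp [Fin.ext_iff]
        omega
      rw [hinsert]
      refine gval_le_gval_insert_of_forall_le hP hU hanti r _ Y w _ (by simp)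
        (fun b hb => ?_) ?_
      · simpa [Fin.le_def, Nat.lt_succ_iff] using hb
      · rw [card_compl, Fintype.card_fin, Fin.card_filter_val_lt]
        omega
    · have hfull : ∀ l, k ≤ l → ({i | (i : ℕ) < l} : Finset (Fin m))ᶜ = ∅ := fun l hl => by
        ext i
        simp only [mem_compl, mem_filter, mem_univ, true_and, notMem_empty, iff_false, not_not]
        omega
      rw [hfull k le_rfl, hfull (k + 1) (by omega)]

lemma gval_prefix_le_gval_restrict (hP : ∀ i j, P i j ∈ Set.Icc (0 : ℝ) 1) (hU : Monotone U)
    {T : ℕ} (hT : 0 < T) (hm : T ≤ m) {r : ℕ} (hr : r ≤ T) (Y : Finset (Fin n)) (w : ℕ) :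
    gval m n P U r ({i | (i : ℕ) < T} : Finset (Fin m))ᶜ Y w ≤
      gval T n (fun i j => P (Fin.castLE hm i) j) U r ∅ Y w := by
  have hmod : ∀ i : Fin m, (i : ℕ) < T → i % T = i := fun i => Nat.mod_eq_of_lt
  refine gval_le_gval_of_injOn hP (fun i j => hP _ j) hU (fun i => ⟨i % T, Nat.mod_lt _ hT⟩)
    r _ _ Y w ?_ (by simp) ?_ ?_
  · rw [card_compl, Fintype.card_fin, Fin.card_filter_val_lt]
    omega
  · intro i hi k hk hik
    simp only [Set.mem_compl_iff, mem_coe, mem_compl, mem_filter, mem_univ, true_and,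
      not_not, Fin.ext_iff] at hi hk hik ⊢
    rwa [hmod i hi, hmod k hk] at hik
  · intro i hi j
    simp only [mem_compl, mem_filter, mem_univ, true_and, not_not] at hi
    exact le_of_eq (congrArg (P · j) (Fin.ext (hmod i hi).symm))

end Game

lemma monotone_comp_min_of_le_succ {β : Type*} [Preorder β] {U : ℕ → β} {T : ℕ}
    (hU : ∀ t < T, U t ≤ U (t + 1)) : Monotone fun t => U (min t T) :=
  monotone_nat_of_le_succ fun t => by
    rcases lt_or_ge t T with ht | ht
    · simpa [min_eq_left ht.le, min_eq_left (Nat.succ_le_of_lt ht)] using hU t ht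
    · simp [min_eq_right ht, min_eq_right (ht.trans t.le_succ)]

theorem abandon_weakest_transitive_general (T m n : ℕ) (hT : 1 ≤ T) (hm : T ≤ m)
    (P : Fin m → Fin n → ℝ) (hP : ∀ i j, P i j ∈ Set.Icc (0 : ℝ) 1)
    (U : ℕ → ℝ) (hU : ∀ t < T, U t ≤ U (t + 1))
    (hsorted : ∀ i j : Fin m, i ≤ j → ∀ l : Fin n, P j l ≤ P i l) :
    gval m n P U T ∅ ∅ 0 =
      gval T n (fun i j => P (Fin.castLE hm i) j) U T ∅ ∅ 0 := by
  -- freezing `U` after `T` wins makes it monotone without changing any reachable payoff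
  set U' : ℕ → ℝ := fun t => U (min t T)
  have hU' : Monotone U' := monotone_comp_min_of_le_succ hU
  have hUU' : Set.EqOn U U' (Set.Icc 0 (0 + T)) := fun t ht => by
    simp [U', min_eq_left (by simpa using ht.2 : t ≤ T)]
  rw [gval_congr_utility T _ _ 0 hUU', gval_congr_utility T _ _ 0 hUU']
  refine le_antisymm ?_ (gval_le_gval_of_injOn (fun i j => hP _ j) hP hU' (Fin.castLE hm)
    T ∅ ∅ ∅ 0 (by simp) (by simp) (Fin.castLE_injective hm).injOn fun _ _ _ => le_rfl)
  calc gval m n P U' T ∅ ∅ 0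
      ≤ gval m n P U' T ({i | (i : ℕ) < T} : Finset (Fin m))ᶜ ∅ 0 := by
        simpa using gval_le_gval_prefix hP hU' (fun i j h => hsorted i j h) hm ∅ 0
    _ ≤ gval T n (fun i j => P (Fin.castLE hm i) j) U' T ∅ ∅ 0 :=
        gval_prefix_le_gval_restrict hP hU' hT hm le_rfl ∅ 0

/-- If the utility function is monotone and the rows of `P` are
sorted by strength (`P i l ≥ P j l` whenever `i ≤ j`), then the value of the game
is unchanged when Team 1 abandons its `m - T` weakest players, i.e. it equals the
value of the game played with only the first `T` rows of `P`. -/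
theorem abandon_weakest_transitive (T m n : ℕ) (hT : 1 ≤ T) (hm : T ≤ m) (hn : T ≤ n)
    (P : Fin m → Fin n → ℝ) (hP : ∀ i j, P i j ∈ Set.Icc (0 : ℝ) 1)
    (U : ℕ → ℝ) (hU : ∀ t < T, U t ≤ U (t + 1))
    (hsorted : ∀ i j : Fin m, i ≤ j → ∀ l : Fin n, P j l ≤ P i l) :
    gval m n P U T ∅ ∅ 0 =
      gval T n (fun i j => P (Fin.castLE hm i) j) U T ∅ ∅ 0 :=
  abandon_weakest_transitive_general T m n hT hm P hP U hU hsorted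
end

section
/- Assume U is monotone, P i l ≥ P j l for all i ≤ j and all l (Team 1's players are sorted by strength), and P l i ≤ P l j for all i ≤ j and all l (Team 2's players are sorted by strength, player j of Team 2 being weaker than player i whenever i ≤ j). Then V(G(T,P,U)) = (1/T!)·Σ_{σ ∈ S_T} Σ_{S ⊆ {1,…,T}} U(|S|)·∏_{i∈S} P i σ(i)·∏_{i∉S} (1 − P i σ(i)), where S_T is the set of all bijections σ of {1,…,T}; i.e., under transitive strengths the value equals that of the competition among the top T players of each team, in which uniformly random play is optimal. -/
/-!
Call the first `r` players of a team not yet fielded its top players, `r` being the number of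
rounds left. By induction on `r`, the value of a state is the average, over all matchings of the
two teams' top players, of the expected utility. Conditioning on the opponent of one fixed player,
this average obeys a recursion that can be expanded around any top player of either team. Hence if
Team 1 fields its top players uniformly, every reply by a top player of Team 2 yields exactly the
average, while a reply by a weaker player `j` plays the role of Team 2's weakest top player (who
is the one dropped from its top players) with higher win probabilities for Team 1; as the
continuation value is monotone in them (`U` is monotone), this only helps Team 1. Symmetrically,
against any strategy of Team 1 the payoffs of Team 2's top replies average to at most the value,
so one of them holds Team 1 to it.
-/

open Finset Equiv

theorem Fin.sum_finset_succAbove {M : Type*} [AddCommMonoid M] {r : ℕ} (k : Fin (r + 1))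
    (φ : Finset (Fin (r + 1)) → M) :
    ∑ S, φ S =
      ∑ S : Finset (Fin r), (φ (S.image k.succAbove) + φ (insert k (S.image k.succAbove))) := by
  have hk : k ∉ univ.image k.succAbove := by simp
  have huniv : (univ : Finset (Fin (r + 1))) = insert k (univ.image k.succAbove) := by
    rw [Fin.univ_succAbove r k, cons_eq_insert, map_eq_image]; rfl
  rw [← powerset_univ, huniv, sum_powerset_insert hk, powerset_image,
    sum_image (image_injective Fin.succAbove_right_injective).injOn,
    sum_image (image_injective Fin.succAbove_right_injective).injOn, powerset_univ,
    ← sum_add_distrib]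

noncomputable def expectedUtility (U : ℕ → ℝ) {r : ℕ} (q : Fin r → ℝ) (w : ℕ) : ℝ :=
  ∑ S : Finset (Fin r), U (w + #S) * ∏ i, if i ∈ S then q i else 1 - q i

theorem expectedUtility_succ (U : ℕ → ℝ) {r : ℕ} (q : Fin (r + 1) → ℝ) (w : ℕ)
    (k : Fin (r + 1)) :
    expectedUtility U q w = q k * expectedUtility U (q ∘ k.succAbove) (w + 1) +
      (1 - q k) * expectedUtility U (q ∘ k.succAbove) w := by
  simp only [expectedUtility, mul_sum, ← sum_add_distrib]
  rw [Fin.sum_finset_succAbove k]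
  refine sum_congr rfl fun S _ => ?_
  have hk : k ∉ S.image k.succAbove := by simp
  rw [card_insert_of_notMem hk, card_image_of_injective _ Fin.succAbove_right_injective,
    Fin.prod_univ_succAbove _ k, Fin.prod_univ_succAbove _ k]
  simp only [hk, ↓reduceIte, mem_image, Fin.succAbove_right_injective.eq_iff, exists_eq_right,
    mem_insert, or_false, Fin.succAbove_ne, false_or, Function.comp_apply]
  rw [show w + (#S + 1) = w + 1 + #S by omega]
  ring

def Fin.permSuccAbove {r : ℕ} (k j : Fin (r + 1)) (τ : Perm (Fin r)) : Perm (Fin (r + 1)) :=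
  ((finSuccEquiv' k).trans τ.optionCongr).trans (finSuccEquiv' j).symm

@[simp] theorem Fin.permSuccAbove_apply_self {r : ℕ} (k j : Fin (r + 1)) (τ : Perm (Fin r)) :
    permSuccAbove k j τ k = j := by
  simp [permSuccAbove]

@[simp] theorem Fin.permSuccAbove_apply_succAbove {r : ℕ} (k j : Fin (r + 1)) (τ : Perm (Fin r))
    (i : Fin r) : permSuccAbove k j τ (k.succAbove i) = j.succAbove (τ i) := by
  simp [permSuccAbove]

theorem Fin.permSuccAbove_injective {r : ℕ} (k j : Fin (r + 1)) :
    Function.Injective (permSuccAbove k j) := fun τ τ' h =>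
  Equiv.ext fun i => by simpa using congrArg (· (k.succAbove i)) h

theorem Fin.card_prod_perm (r : ℕ) :
    Fintype.card (Fin (r + 1) × Perm (Fin r)) = Fintype.card (Perm (Fin (r + 1))) := by
  simp [Fintype.card_perm, Nat.factorial_succ]

theorem Fin.sum_perm_eq_sum_permSuccAbove_left {M : Type*} [AddCommMonoid M] {r : ℕ}
    (j : Fin (r + 1)) (g : Perm (Fin (r + 1)) → M) :
    ∑ σ, g σ = ∑ k, ∑ τ, g (permSuccAbove k j τ) := by
  have hinj :
      Function.Injective fun kτ : Fin (r + 1) × Perm (Fin r) => permSuccAbove kτ.1 j kτ.2 := by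
    rintro ⟨k, τ⟩ ⟨k', τ'⟩ (h : permSuccAbove k j τ = permSuccAbove k' j τ')
    have hk : k = k' := (permSuccAbove k j τ).injective <| by
      rw [permSuccAbove_apply_self, h, permSuccAbove_apply_self]
    subst hk
    rw [permSuccAbove_injective k j h]
  rw [← Fintype.sum_prod_type', ((Fintype.bijective_iff_injective_and_card _).2
    ⟨hinj, card_prod_perm r⟩).sum_comp g]

theorem Fin.sum_perm_eq_sum_permSuccAbove_right {M : Type*} [AddCommMonoid M] {r : ℕ}
    (k : Fin (r + 1)) (g : Perm (Fin (r + 1)) → M) :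
    ∑ σ, g σ = ∑ j, ∑ τ, g (permSuccAbove k j τ) := by
  have hinj :
      Function.Injective fun jτ : Fin (r + 1) × Perm (Fin r) => permSuccAbove k jτ.1 jτ.2 := by
    rintro ⟨j, τ⟩ ⟨j', τ'⟩ (h : permSuccAbove k j τ = permSuccAbove k j' τ')
    have hj : j = j' := by simpa using congrArg (· k) h
    subst hj
    rw [permSuccAbove_injective k j h]
  rw [← Fintype.sum_prod_type', ((Fintype.bijective_iff_injective_and_card _).2
    ⟨hinj, card_prod_perm r⟩).sum_comp g]

noncomputable def matchingValue {α β : Type*} (P : α → β → ℝ) (U : ℕ → ℝ) {r : ℕ}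
    (a : Fin r → α) (b : Fin r → β) (w : ℕ) : ℝ :=
  (r.factorial : ℝ)⁻¹ * ∑ σ : Perm (Fin r), expectedUtility U (fun i => P (a i) (b (σ i))) w

noncomputable def continuationValue {α β : Type*} (P : α → β → ℝ) (U : ℕ → ℝ) {r : ℕ}
    (a : Fin (r + 1) → α) (b : Fin (r + 1) → β) (w : ℕ) (k j : Fin (r + 1)) (p : ℝ) : ℝ :=
  p * matchingValue P U (a ∘ k.succAbove) (b ∘ j.succAbove) (w + 1) +
    (1 - p) * matchingValue P U (a ∘ k.succAbove) (b ∘ j.succAbove) w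

section MatchingValue
variable {α β : Type*} (P : α → β → ℝ) (U : ℕ → ℝ) {r : ℕ}
  (a : Fin (r + 1) → α) (b : Fin (r + 1) → β) (w : ℕ)

theorem sum_expectedUtility_permSuccAbove (k j : Fin (r + 1)) :
    ∑ τ, expectedUtility U (fun i => P (a i) (b (Fin.permSuccAbove k j τ i))) w =
      r.factorial * continuationValue P U a b w k j (P (a k) (b j)) := by
  simp_rw [expectedUtility_succ U _ w k, Function.comp_def, Fin.permSuccAbove_apply_self,
    Fin.permSuccAbove_apply_succAbove, sum_add_distrib, ← mul_sum]
  simp only [continuationValue, matchingValue, Function.comp_apply]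
  field_simp

theorem matchingValue_succ_left (j : Fin (r + 1)) :
    matchingValue P U a b w =
      ((r : ℝ) + 1)⁻¹ * ∑ k, continuationValue P U a b w k j (P (a k) (b j)) := by
  rw [matchingValue, Fin.sum_perm_eq_sum_permSuccAbove_left j]
  simp_rw [sum_expectedUtility_permSuccAbove, ← mul_sum, Nat.factorial_succ]
  push_cast
  field_simp

theorem matchingValue_succ_right (k : Fin (r + 1)) :
    matchingValue P U a b w =
      ((r : ℝ) + 1)⁻¹ * ∑ j, continuationValue P U a b w k j (P (a k) (b j)) := by
  rw [matchingValue, Fin.sum_perm_eq_sum_permSuccAbove_right k]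
  simp_rw [sum_expectedUtility_permSuccAbove, ← mul_sum, Nat.factorial_succ]
  push_cast
  field_simp

end MatchingValue

section Monotone
variable {α β : Type*} {U : ℕ → ℝ} {T : ℕ}

theorem expectedUtility_le_succ (hU : ∀ t < T, U t ≤ U (t + 1)) {r : ℕ} {q : Fin r → ℝ}
    (hq : ∀ i, q i ∈ Set.Icc (0 : ℝ) 1) {w : ℕ} (hw : w + r < T) :
    expectedUtility U q w ≤ expectedUtility U q (w + 1) := by
  refine sum_le_sum fun S _ => mul_le_mul_of_nonneg_right ?_ <| prod_nonneg fun i _ => ?_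
  · have := S.card_le_univ
    rw [Fintype.card_fin] at this
    rw [add_right_comm]
    exact hU _ (by omega)
  · split_ifs
    exacts [(hq i).1, sub_nonneg.2 (hq i).2]

theorem matchingValue_le_succ (hU : ∀ t < T, U t ≤ U (t + 1)) {P : α → β → ℝ}
    (hP : ∀ x y, P x y ∈ Set.Icc (0 : ℝ) 1) {r : ℕ} (a : Fin r → α) (b : Fin r → β) {w : ℕ}
    (hw : w + r < T) : matchingValue P U a b w ≤ matchingValue P U a b (w + 1) :=
  mul_le_mul_of_nonneg_left
    (sum_le_sum fun _ _ => expectedUtility_le_succ hU (fun _ => hP _ _) hw) (by positivity)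

theorem continuationValue_mono (hU : ∀ t < T, U t ≤ U (t + 1)) {P : α → β → ℝ}
    (hP : ∀ x y, P x y ∈ Set.Icc (0 : ℝ) 1) {r : ℕ} (a : Fin (r + 1) → α) (b : Fin (r + 1) → β)
    {w : ℕ} (hw : w + (r + 1) ≤ T) (k j : Fin (r + 1)) :
    Monotone (continuationValue P U a b w k j) := fun p q hpq => by
  have := matchingValue_le_succ hU hP (a ∘ k.succAbove) (b ∘ j.succAbove) (w := w) (by omega)
  simp only [continuationValue]
  nlinarith

end Monotone

/-- `a` enumerates the `r` least elements outside `X`, i.e. the strongest players not yet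
fielded. -/
structure IsFirstOutside {α : Type*} [LinearOrder α] {r : ℕ} (X : Finset α) (a : Fin r → α) :
    Prop where
  injective : Function.Injective a
  notMem : ∀ k, a k ∉ X
  le : ∀ x ∉ X, x ∉ Set.range a → ∀ k, a k ≤ x

/-- Once `x` is fielded, the first `r` players outside `insert x X` are those of `a` other than
`a k`. -/
def Displaces {α : Type*} [LinearOrder α] {r : ℕ} (a : Fin (r + 1) → α) (x : α)
    (k : Fin (r + 1)) : Prop :=
  x = a k ∨ x ∉ Set.range a ∧ ∀ k', a k' ≤ a k

section FirstOutside
variable {α : Type*} [LinearOrder α] {r : ℕ}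

theorem exists_displaces (a : Fin (r + 1) → α) (x : α) : ∃ k, Displaces a x k := by
  by_cases hx : x ∈ Set.range a
  · obtain ⟨k, rfl⟩ := hx
    exact ⟨k, Or.inl rfl⟩
  · obtain ⟨k, hk⟩ := Finite.exists_max a
    exact ⟨k, Or.inr ⟨hx, hk⟩⟩

theorem isFirstOutside_castLE {m : ℕ} (h : r ≤ m) :
    IsFirstOutside (∅ : Finset (Fin m)) (Fin.castLE h) where
  injective := Fin.castLE_injective h
  notMem _ := notMem_empty _
  le x _ hx k := by
    have : r ≤ x := by
      by_contra! hxr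
      exact hx ⟨⟨x, hxr⟩, rfl⟩
    rw [Fin.le_def, Fin.val_castLE]
    omega

variable {X : Finset α} {a : Fin (r + 1) → α} {x : α} {k : Fin (r + 1)}

theorem IsFirstOutside.le_of_displaces (ha : IsFirstOutside X a) (hx : x ∉ X)
    (h : Displaces a x k) : a k ≤ x := by
  rcases h with rfl | ⟨hxa, -⟩
  exacts [le_rfl, ha.le x hx hxa k]

theorem IsFirstOutside.insert (ha : IsFirstOutside X a) (h : Displaces a x k) :
    IsFirstOutside (insert x X) (a ∘ k.succAbove) where
  injective := ha.injective.comp Fin.succAbove_right_injective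
  notMem l hl := by
    rcases Finset.mem_insert.1 hl with hx | hX
    · rcases h with rfl | ⟨hxa, -⟩
      · exact Fin.succAbove_ne k l (ha.injective hx)
      · exact hxa ⟨_, hx⟩
    · exact ha.notMem _ hX
  le y hy hya l := by
    rw [Finset.mem_insert, not_or] at hy
    obtain ⟨hyx, hyX⟩ := hy
    by_cases hyr : y ∈ Set.range a
    · obtain ⟨k', rfl⟩ := hyr
      obtain rfl : k' = k := by
        by_contra hk
        obtain ⟨l', rfl⟩ := Fin.exists_succAbove_eq hk
        exact hya ⟨l', rfl⟩
      rcases h with rfl | ⟨-, hmax⟩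
      exacts [absurd rfl hyx, hmax _]
    · exact ha.le y hyX hyr _

end FirstOutside

theorem sum_ite_mem_image_mul {α : Type*} [DecidableEq α] [Fintype α] {r : ℕ} {a : Fin r → α}
    (ha : Function.Injective a) (c : ℝ) (g : α → ℝ) :
    ∑ i, (if i ∈ univ.image a then c else 0) * g i = c * ∑ k, g (a k) := by
  simp_rw [ite_mul, zero_mul, sum_ite_mem, univ_inter, sum_image ha.injOn, mul_sum]

noncomputable def roundValue (m n : ℕ) (P : Fin m → Fin n → ℝ) (U : ℕ → ℝ) (r : ℕ)
    (X : Finset (Fin m)) (Y : Finset (Fin n)) (w : ℕ) (i : Fin m) (j : Fin n) : ℝ :=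
  P i j * gval m n P U r (insert i X) (insert j Y) (w + 1) +
    (1 - P i j) * gval m n P U r (insert i X) (insert j Y) w

section Game
variable {m n : ℕ} {P : Fin m → Fin n → ℝ} {U : ℕ → ℝ} {r : ℕ} {X : Finset (Fin m)}
  {Y : Finset (Fin n)} {w : ℕ}

theorem gval_succ_eq_of_saddle {v : ℝ} (p₀ : Fin m → ℝ) (hp₀ : ∀ i, 0 ≤ p₀ i)
    (hp₀X : ∀ i ∈ X, p₀ i = 0) (hp₀sum : ∑ i, p₀ i = 1)
    (hlow : ∀ j ∉ Y, v ≤ ∑ i, p₀ i * roundValue m n P U r X Y w i j)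
    (hup : ∀ p : Fin m → ℝ, (∀ i, 0 ≤ p i) → (∀ i ∈ X, p i = 0) → ∑ i, p i = 1 →
      ∃ j ∉ Y, ∑ i, p i * roundValue m n P U r X Y w i j ≤ v) :
    gval m n P U (r + 1) X Y w = v := by
  have hbdd (p : Fin m → ℝ) : BddBelow {u | ∃ j, j ∉ Y ∧
      u = ∑ i, p i * roundValue m n P U r X Y w i j} :=
    ((Set.finite_range fun j => ∑ i, p i * roundValue m n P U r X Y w i j).subset
      (by rintro _ ⟨j, -, rfl⟩; exact ⟨j, rfl⟩)).bddBelow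
  obtain ⟨j₀, hj₀, hj₀v⟩ := hup p₀ hp₀ hp₀X hp₀sum
  rw [gval]
  refine IsGreatest.csSup_eq ⟨⟨p₀, hp₀, hp₀X, hp₀sum, (IsLeast.csInf_eq ⟨?_, ?_⟩).symm⟩, ?_⟩
  · exact ⟨j₀, hj₀, le_antisymm (hlow j₀ hj₀) hj₀v⟩
  · rintro _ ⟨j, hj, rfl⟩
    exact hlow j hj
  · rintro _ ⟨p, hp, hpX, hpsum, rfl⟩
    obtain ⟨j, hj, hjv⟩ := hup p hp hpX hpsum
    exact (csInf_le (hbdd p) ⟨j, hj, rfl⟩).trans hjv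

theorem gval_succ_eq_matchingValue {T : ℕ} (hP : ∀ i j, P i j ∈ Set.Icc (0 : ℝ) 1)
    (hU : ∀ t < T, U t ≤ U (t + 1))
    (hsorted1 : ∀ i j : Fin m, i ≤ j → ∀ l : Fin n, P j l ≤ P i l)
    (hsorted2 : ∀ i j : Fin n, i ≤ j → ∀ l : Fin m, P l i ≤ P l j)
    (hw : w + (r + 1) ≤ T) {a : Fin (r + 1) → Fin m} {b : Fin (r + 1) → Fin n}
    (ha : IsFirstOutside X a) (hb : IsFirstOutside Y b)
    (hround : ∀ i ∉ X, ∀ j ∉ Y, ∀ k l, Displaces a i k → Displaces b j l →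
      roundValue m n P U r X Y w i j = continuationValue P U a b w k l (P i j)) :
    gval m n P U (r + 1) X Y w = matchingValue P U a b w := by
  have hmono := continuationValue_mono hU hP a b hw
  have hr : ((r : ℝ) + 1) ≠ 0 := by positivity
  refine gval_succ_eq_of_saddle (fun i => if i ∈ univ.image a then ((r : ℝ) + 1)⁻¹ else 0)
    (fun i => by positivity) (fun i hi => if_neg ?_) ?_ ?_ ?_
  · intro hia
    obtain ⟨k, -, rfl⟩ := mem_image.1 hia
    exact ha.notMem k hi
  · simpa [hr] using sum_ite_mem_image_mul ha.injective ((r : ℝ) + 1)⁻¹ fun _ => 1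
  · intro j hj
    obtain ⟨l, hl⟩ := exists_displaces b j
    rw [sum_ite_mem_image_mul ha.injective, matchingValue_succ_left P U a b w l]
    refine mul_le_mul_of_nonneg_left (sum_le_sum fun k _ => ?_) (by positivity)
    rw [hround _ (ha.notMem k) j hj k l (Or.inl rfl) hl]
    exact hmono k l (hsorted2 _ _ (hb.le_of_displaces hj hl) _)
  · intro p hp hpX hpsum
    have hbound (i : Fin m) :
        p i * ∑ l, roundValue m n P U r X Y w i (b l) ≤
          p i * (((r : ℝ) + 1) * matchingValue P U a b w) := by
      by_cases hi : i ∈ X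
      · simp [hpX i hi]
      obtain ⟨k, hk⟩ := exists_displaces a i
      refine mul_le_mul_of_nonneg_left ?_ (hp i)
      rw [matchingValue_succ_right P U a b w k, mul_inv_cancel_left₀ hr]
      refine sum_le_sum fun l _ => ?_
      rw [hround i hi _ (hb.notMem l) k l hk (Or.inl rfl)]
      exact hmono k l (hsorted1 _ _ (ha.le_of_displaces hi hk) _)
    obtain ⟨l, -, hl⟩ := exists_le_of_sum_le univ_nonempty <| calc
      ∑ l, ∑ i, p i * roundValue m n P U r X Y w i (b l)
          = ∑ i, p i * ∑ l, roundValue m n P U r X Y w i (b l) := by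
        rw [sum_comm]; simp_rw [mul_sum]
      _ ≤ ∑ i, p i * (((r : ℝ) + 1) * matchingValue P U a b w) := sum_le_sum fun i _ => hbound i
      _ = ∑ _l : Fin (r + 1), matchingValue P U a b w := by simp [← sum_mul, hpsum]
    exact ⟨b l, hb.notMem l, hl⟩

theorem gval_eq_matchingValue {T : ℕ} (hP : ∀ i j, P i j ∈ Set.Icc (0 : ℝ) 1)
    (hU : ∀ t < T, U t ≤ U (t + 1))
    (hsorted1 : ∀ i j : Fin m, i ≤ j → ∀ l : Fin n, P j l ≤ P i l)
    (hsorted2 : ∀ i j : Fin n, i ≤ j → ∀ l : Fin m, P l i ≤ P l j)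
    (hw : w + r ≤ T) {a : Fin r → Fin m} {b : Fin r → Fin n}
    (ha : IsFirstOutside X a) (hb : IsFirstOutside Y b) :
    gval m n P U r X Y w = matchingValue P U a b w := by
  induction r generalizing X Y w with
  | zero => simp [gval, matchingValue, expectedUtility, Finset.eq_empty_of_isEmpty]
  | succ r ih =>
    refine gval_succ_eq_matchingValue hP hU hsorted1 hsorted2 hw ha hb
      fun i _ j _ k l hik hjl => ?_
    rw [roundValue, continuationValue, ih (by omega) (ha.insert hik) (hb.insert hjl),
      ih (by omega) (ha.insert hik) (hb.insert hjl)]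

end Game

theorem transitive_value_uniform_general (T m n : ℕ) (hm : T ≤ m) (hn : T ≤ n)
    (P : Fin m → Fin n → ℝ) (hP : ∀ i j, P i j ∈ Set.Icc (0 : ℝ) 1)
    (U : ℕ → ℝ) (hU : ∀ t < T, U t ≤ U (t + 1))
    (hsorted1 : ∀ i j : Fin m, i ≤ j → ∀ l : Fin n, P j l ≤ P i l)
    (hsorted2 : ∀ i j : Fin n, i ≤ j → ∀ l : Fin m, P l i ≤ P l j) :
    gval m n P U T ∅ ∅ 0 =
      (T.factorial : ℝ)⁻¹ * ∑ σ : Equiv.Perm (Fin T), ∑ S : Finset (Fin T),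
        U S.card * (∏ i ∈ S, P (Fin.castLE hm i) (Fin.castLE hn (σ i))) *
          ∏ i ∈ Sᶜ, (1 - P (Fin.castLE hm i) (Fin.castLE hn (σ i))) := by
  rw [gval_eq_matchingValue hP hU hsorted1 hsorted2 (zero_add T).le
    (isFirstOutside_castLE hm) (isFirstOutside_castLE hn), matchingValue]
  simp_rw [expectedUtility, zero_add, prod_ite, mul_assoc]
  simp [filter_notMem_eq_sdiff, compl_eq_univ_sdiff]

/-- If the utility function is monotone and both teams' players are
sorted by strength, then the value of the game equals the value of the competition
among the top `T` players of each team with both teams playing uniformly at random: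
the uniform average, over all matchings `σ` of the top `T` players, of the expected
utility. -/
theorem transitive_value_uniform (T m n : ℕ) (hT : 1 ≤ T) (hm : T ≤ m) (hn : T ≤ n)
    (P : Fin m → Fin n → ℝ) (hP : ∀ i j, P i j ∈ Set.Icc (0 : ℝ) 1)
    (U : ℕ → ℝ) (hU : ∀ t < T, U t ≤ U (t + 1))
    (hsorted1 : ∀ i j : Fin m, i ≤ j → ∀ l : Fin n, P j l ≤ P i l)
    (hsorted2 : ∀ i j : Fin n, i ≤ j → ∀ l : Fin m, P l i ≤ P l j) :
    gval m n P U T ∅ ∅ 0 =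
      (T.factorial : ℝ)⁻¹ * ∑ σ : Equiv.Perm (Fin T), ∑ S : Finset (Fin T),
        U S.card * (∏ i ∈ S, P (Fin.castLE hm i) (Fin.castLE hn (σ i))) *
          ∏ i ∈ Sᶜ, (1 - P (Fin.castLE hm i) (Fin.castLE hn (σ i))) :=
  transitive_value_uniform_general T m n hm hn P hP U hU hsorted1 hsorted2
end
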